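/- Let ρ : B → A be a ring homomorphism and α, β ring endomorphisms of B such that ρ∘α ≤ ρ and ρ∘β ≤ ρ. Let R = Hom(ρ,ρ) be the intertwiner endomorphism ring (a subring of A) and set F(α) = Hom(ρ, ρ∘α) ⊆ A, an (R,R)-bimodule via multiplication in A, and similarly F(β) and F(α∘β). Then: (i) F(α) is finitely generated projective as a right R-module; (ii) the map F(α) ⊗_R F(β) → F(α∘β) induced by multiplication in A, x ⊗ y ↦ x·y, is bijective, with inverse z ↦ Σ_i q_i ⊗ (p_i·z), where p_i ∈ Hom(ρ∘α, ρ), q_i ∈ Hom(ρ, ρ∘α) is any direct summand diagram witnessing ρ∘α ≤ ρ. -/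

import Mathlib

open MulOpposite TensorProduct

/-- `t` is an intertwiner from the ring homomorphism `α` to the ring homomorphism `β`. -/
def IsIntertwiner {A B : Type*} [Ring A] [Ring B] (α β : A →+* B) (t : B) : Prop :=
  ∀ a : A, t * α a = β a * t

/-- `ρ ≤ σ` for parallel ring homomorphisms: there is a direct summand diagram. -/
def RingHomLE {A B : Type*} [Ring A] [Ring B] (ρ σ : A →+* B) : Prop :=
  ∃ (n : ℕ) (b a : Fin n → B),
    (∀ i, IsIntertwiner ρ σ (b i)) ∧ (∀ i, IsIntertwiner σ ρ (a i)) ∧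
    (∑ i, a i * b i) = 1

variable {A B : Type*} [Ring A] [Ring B]

/-- The additive group `Hom(α,β)` of intertwiners, as an additive subgroup of `B`. -/
def IntwGrp (α β : A →+* B) : AddSubgroup B where
  carrier := {t | IsIntertwiner α β t}
  add_mem' := by
    intro x y hx hy a
    simp only [add_mul, mul_add, hx a, hy a]
  zero_mem' := by intro a; simp
  neg_mem' := by
    intro x hx a
    simp only [neg_mul, mul_neg, hx a]

/-- The intertwiner endomorphism ring `R = Hom(ρ,ρ)` as a subring. -/
def EndSubring (ρ : A →+* B) : Subring B where
  carrier := {t | IsIntertwiner ρ ρ t}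
  mul_mem' := by
    intro x y hx hy a
    rw [mul_assoc, hy a, ← mul_assoc, hx a, mul_assoc]
  one_mem' := by intro a; rw [one_mul, mul_one]
  add_mem' := by
    intro x y hx hy a
    simp only [add_mul, mul_add, hx a, hy a]
  zero_mem' := by intro a; simp
  neg_mem' := by
    intro x hx a
    simp only [neg_mul, mul_neg, hx a]

/-- `Hom(σ,ρ)` is a right module over `Hom(σ,σ)` by multiplication. -/
instance (σ ρ : A →+* B) : SMul (EndSubring σ)ᵐᵒᵖ (IntwGrp σ ρ) :=
  ⟨fun s v => ⟨(v : B) * (s.unop : B), by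
    intro a
    rw [mul_assoc, (s.unop).2 a, ← mul_assoc, v.2 a, mul_assoc]⟩⟩

theorem opSmul_def (σ ρ : A →+* B) (s : (EndSubring σ)ᵐᵒᵖ) (v : IntwGrp σ ρ) :
    ((s • v : IntwGrp σ ρ) : B) = (v : B) * (s.unop : B) := rfl

instance (σ ρ : A →+* B) : Module (EndSubring σ)ᵐᵒᵖ (IntwGrp σ ρ) where
  one_smul v := by apply Subtype.ext; simp [opSmul_def]
  mul_smul s t v := by apply Subtype.ext; simp [opSmul_def, mul_assoc]
  smul_zero s := by apply Subtype.ext; simp [opSmul_def]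
  smul_add s v w := by apply Subtype.ext; simp [opSmul_def, add_mul]
  add_smul s t v := by apply Subtype.ext; simp [opSmul_def, mul_add]
  zero_smul v := by apply Subtype.ext; simp [opSmul_def]

/-- For `ρ : B → A` and an endomorphism `σ` of `B`, the group
`F(σ) = Hom(ρ, ρ∘σ)` is a left module over `R = Hom(ρ,ρ)` by multiplication,
since `R` commutes with the image of `ρ`. -/
instance (ρ : B →+* A) (σ : B →+* B) : SMul (EndSubring ρ) (IntwGrp ρ (ρ.comp σ)) :=
  ⟨fun r x => ⟨(r : A) * (x : A), by
    intro b
    rw [mul_assoc, x.2 b, ← mul_assoc]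
    have h := r.2 (σ b)
    simp only [RingHom.comp_apply]
    rw [show (r : A) * ρ (σ b) = ρ (σ b) * (r : A) from h, mul_assoc]⟩⟩

theorem lSmul_def (ρ : B →+* A) (σ : B →+* B) (r : EndSubring ρ)
    (x : IntwGrp ρ (ρ.comp σ)) :
    ((r • x : IntwGrp ρ (ρ.comp σ)) : A) = (r : A) * (x : A) := rfl

instance (ρ : B →+* A) (σ : B →+* B) : Module (EndSubring ρ) (IntwGrp ρ (ρ.comp σ)) where
  one_smul x := by apply Subtype.ext; simp [lSmul_def]
  mul_smul r s x := by apply Subtype.ext; simp [lSmul_def, mul_assoc]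
  smul_zero r := by apply Subtype.ext; simp [lSmul_def]
  smul_add r x y := by apply Subtype.ext; simp [lSmul_def, mul_add]
  add_smul r s x := by apply Subtype.ext; simp [lSmul_def, add_mul]
  zero_smul x := by apply Subtype.ext; simp [lSmul_def]

/-- The subgroup of `F(α) ⊗_ℤ F(β)` generated by the `R`-balancing relations,
whose quotient realizes `F(α) ⊗_R F(β)`. -/
noncomputable def balancedRelF (ρ : B →+* A) (α β : B →+* B) :
    AddSubgroup ((IntwGrp ρ (ρ.comp α)) ⊗[ℤ] (IntwGrp ρ (ρ.comp β))) :=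
  AddSubgroup.closure
    {z | ∃ (x : IntwGrp ρ (ρ.comp α)) (r : EndSubring ρ) (y : IntwGrp ρ (ρ.comp β)),
      z = (op r • x) ⊗ₜ[ℤ] y - x ⊗ₜ[ℤ] (r • y)}

/-- For `p ∈ Hom(ρ∘α, ρ)` and `z ∈ F(α∘β)`, the product `p·z` lies in `F(β)`. -/
def pMulElem (ρ : B →+* A) (α β : B →+* B) (p : A)
    (hp : IsIntertwiner (ρ.comp α) ρ p) (z : IntwGrp ρ (ρ.comp (α.comp β))) :
    IntwGrp ρ (ρ.comp β) :=
  ⟨p * (z : A), by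
    intro b
    rw [mul_assoc, z.2 b, ← mul_assoc]
    have h := hp (β b)
    simp only [RingHom.comp_apply] at h ⊢
    rw [h, mul_assoc]⟩

/-!
The right `R`-module `F(α)` has a dual basis: a direct summand diagram `(pᵢ, qᵢ)` for
`ρ∘α ≤ ρ` gives `x = Σᵢ qᵢ · (pᵢ x)` with `pᵢ x ∈ R`, so `F(α)` is a retract of `Rⁿ`.
The same identity, pushed through the balancing relation
`qᵢ ⊗ (pᵢ x) y = qᵢ (pᵢ x) ⊗ y`, shows that `z ↦ Σᵢ qᵢ ⊗ pᵢ z` is a left inverse of the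
multiplication map `F(α) ⊗_R F(β) → F(α∘β)`, and `Σᵢ qᵢ pᵢ = 1` shows that it is a right inverse.
-/

theorem IsIntertwiner.mul {α β γ : A →+* B} {s t : B} (hs : IsIntertwiner β γ s)
    (ht : IsIntertwiner α β t) : IsIntertwiner α γ (s * t) := fun a => by
  rw [mul_assoc, ht a, ← mul_assoc, hs a, mul_assoc]

theorem IsIntertwiner.comp {C : Type*} [Ring C] {α β : A →+* B} {t : B}
    (ht : IsIntertwiner α β t) (σ : C →+* A) : IsIntertwiner (α.comp σ) (β.comp σ) t :=
  fun c => ht (σ c)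

namespace IntwGrp

section DualBasis

variable {σ τ : A →+* B}

def coord {p : B} (hp : IsIntertwiner τ σ p) (x : IntwGrp σ τ) : EndSubring σ :=
  ⟨p * x, hp.mul x.2⟩

variable {n : ℕ} {p q : Fin n → B} (hp : ∀ i, IsIntertwiner τ σ (p i))
  (hq : ∀ i, IsIntertwiner σ τ (q i))

theorem sum_coord_smul (hpq : ∑ i, q i * p i = 1) (x : IntwGrp σ τ) :
    ∑ i, op (coord (hp i) x) • (⟨q i, hq i⟩ : IntwGrp σ τ) = x := by
  apply Subtype.ext
  simp only [AddSubgroup.val_finsetSum, opSmul_def, unop_op, coord, ← mul_assoc,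
    ← Finset.sum_mul, hpq, one_mul]

def coords : IntwGrp σ τ →ₗ[(EndSubring σ)ᵐᵒᵖ] Fin n → (EndSubring σ)ᵐᵒᵖ where
  toFun x i := op (coord (hp i) x)
  map_add' _ _ := funext fun _ => congrArg op (Subtype.ext (mul_add _ _ _))
  map_smul' _ _ := funext fun _ => congrArg op (Subtype.ext (mul_assoc _ _ _).symm)

theorem linearCombination_comp_coords (hpq : ∑ i, q i * p i = 1) :
    (Fintype.linearCombination (EndSubring σ)ᵐᵒᵖ fun i => (⟨q i, hq i⟩ : IntwGrp σ τ)) ∘ₗ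
      coords hp = LinearMap.id :=
  LinearMap.ext (sum_coord_smul hp hq hpq)

end DualBasis

variable {σ τ : A →+* B}

theorem finite_of_ringHomLE (h : RingHomLE τ σ) :
    Module.Finite (EndSubring σ)ᵐᵒᵖ (IntwGrp σ τ) := by
  obtain ⟨n, p, q, hp, hq, hpq⟩ := h
  exact Module.Finite.of_surjective _
    (LinearMap.surjective_of_comp_eq_id _ _ (linearCombination_comp_coords hp hq hpq))

theorem projective_of_ringHomLE (h : RingHomLE τ σ) :
    Module.Projective (EndSubring σ)ᵐᵒᵖ (IntwGrp σ τ) := by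
  obtain ⟨n, p, q, hp, hq, hpq⟩ := h
  exact Module.Projective.of_split _ _ (linearCombination_comp_coords hp hq hpq)

end IntwGrp

noncomputable section TensorMul

variable (ρ : B →+* A) (α β : B →+* B)

abbrev BalancedTensor :=
  (IntwGrp ρ (ρ.comp α) ⊗[ℤ] IntwGrp ρ (ρ.comp β)) ⧸ balancedRelF ρ α β

def intwMul (x : IntwGrp ρ (ρ.comp α)) (y : IntwGrp ρ (ρ.comp β)) :
    IntwGrp ρ (ρ.comp (α.comp β)) :=
  ⟨x * y, (IsIntertwiner.comp x.2 β).mul y.2⟩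

def tensorMul :
    IntwGrp ρ (ρ.comp α) ⊗[ℤ] IntwGrp ρ (ρ.comp β) →+ IntwGrp ρ (ρ.comp (α.comp β)) :=
  (TensorProduct.lift (LinearMap.mk₂ ℤ (intwMul ρ α β)
    (fun _ _ _ => Subtype.ext (add_mul _ _ _))
    (fun _ _ _ => Subtype.ext (smul_mul_assoc _ _ _))
    (fun _ _ _ => Subtype.ext (mul_add _ _ _))
    (fun _ _ _ => Subtype.ext (mul_smul_comm _ _ _)))).toAddMonoidHom

theorem balancedRelF_le_ker : balancedRelF ρ α β ≤ (tensorMul ρ α β).ker := by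
  refine (AddSubgroup.closure_le _).2 ?_
  rintro _ ⟨x, r, y, rfl⟩
  rw [SetLike.mem_coe, AddMonoidHom.mem_ker, map_sub, sub_eq_zero]
  exact Subtype.ext (mul_assoc (x : A) r y)

def balancedTensorMul : BalancedTensor ρ α β →+ IntwGrp ρ (ρ.comp (α.comp β)) :=
  QuotientAddGroup.lift _ (tensorMul ρ α β) (balancedRelF_le_ker ρ α β)

variable {ρ α β}

theorem balancedTensor_mk_tmul_smul (x : IntwGrp ρ (ρ.comp α)) (r : EndSubring ρ)
    (y : IntwGrp ρ (ρ.comp β)) :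
    (QuotientAddGroup.mk (x ⊗ₜ[ℤ] (r • y)) : BalancedTensor ρ α β) =
      QuotientAddGroup.mk ((op r • x) ⊗ₜ[ℤ] y) := by
  rw [eq_comm, QuotientAddGroup.eq_iff_sub_mem]
  exact AddSubgroup.subset_closure ⟨x, r, y, rfl⟩

theorem pMulElem_add {p : A} (hp : IsIntertwiner (ρ.comp α) ρ p)
    (z z' : IntwGrp ρ (ρ.comp (α.comp β))) :
    pMulElem ρ α β p hp (z + z') = pMulElem ρ α β p hp z + pMulElem ρ α β p hp z' :=
  Subtype.ext (mul_add _ _ _)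

theorem pMulElem_intwMul {p : A} (hp : IsIntertwiner (ρ.comp α) ρ p)
    (x : IntwGrp ρ (ρ.comp α)) (y : IntwGrp ρ (ρ.comp β)) :
    pMulElem ρ α β p hp (intwMul ρ α β x y) = IntwGrp.coord hp x • y :=
  Subtype.ext (mul_assoc _ _ _).symm

variable {n : ℕ} {p q : Fin n → A} (hp : ∀ i, IsIntertwiner (ρ.comp α) ρ (p i))
  (hq : ∀ i, IsIntertwiner ρ (ρ.comp α) (q i))

def balancedTensorMulInv : IntwGrp ρ (ρ.comp (α.comp β)) →+ BalancedTensor ρ α β :=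
  AddMonoidHom.mk'
    (fun z => ∑ i, QuotientAddGroup.mk ((⟨q i, hq i⟩ : IntwGrp ρ (ρ.comp α)) ⊗ₜ[ℤ]
      pMulElem ρ α β (p i) (hp i) z))
    fun _ _ => by
      simp only [pMulElem_add, tmul_add, QuotientAddGroup.mk_add, Finset.sum_add_distrib]

variable (hpq : ∑ i, q i * p i = 1)
include hpq

theorem rightInverse_balancedTensorMulInv :
    Function.RightInverse (balancedTensorMulInv hp hq) (balancedTensorMul ρ α β) := by
  intro z
  rw [balancedTensorMulInv, AddMonoidHom.mk'_apply, map_sum]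
  apply Subtype.ext
  rw [AddSubgroup.val_finsetSum]
  change ∑ i, q i * (p i * (z : A)) = z
  simp only [← mul_assoc, ← Finset.sum_mul, hpq, one_mul]

theorem leftInverse_balancedTensorMulInv :
    Function.LeftInverse (balancedTensorMulInv hp hq) (balancedTensorMul ρ α β) := by
  intro u
  obtain ⟨t, rfl⟩ := QuotientAddGroup.mk_surjective u
  induction t using TensorProduct.induction_on with
  | zero => simp
  | tmul x y =>
    change ∑ i, QuotientAddGroup.mk (_ ⊗ₜ[ℤ] pMulElem ρ α β (p i) (hp i) (intwMul ρ α β x y)) = _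
    simp only [pMulElem_intwMul, balancedTensor_mk_tmul_smul]
    rw [← QuotientAddGroup.mk_sum, ← sum_tmul, IntwGrp.sum_coord_smul hp hq hpq]
  | add s t hs ht => simp only [QuotientAddGroup.mk_add, map_add, hs, ht]

end TensorMul

theorem stmt_16_general (ρ : B →+* A) (α β : B →+* B)
    (hα : RingHomLE (ρ.comp α) ρ) :
    (Module.Finite (EndSubring ρ)ᵐᵒᵖ (IntwGrp ρ (ρ.comp α)) ∧
      Module.Projective (EndSubring ρ)ᵐᵒᵖ (IntwGrp ρ (ρ.comp α))) ∧
    ∃ φ : ((IntwGrp ρ (ρ.comp α)) ⊗[ℤ] (IntwGrp ρ (ρ.comp β))) ⧸ balancedRelF ρ α β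
        →+ IntwGrp ρ (ρ.comp (α.comp β)),
      (∀ (x : IntwGrp ρ (ρ.comp α)) (y : IntwGrp ρ (ρ.comp β)),
        ((φ (QuotientAddGroup.mk (x ⊗ₜ[ℤ] y)) : A) = (x : A) * (y : A))) ∧
      Function.Bijective φ ∧
      (∀ (n : ℕ) (p q : Fin n → A)
        (hp : ∀ i, IsIntertwiner (ρ.comp α) ρ (p i))
        (hq : ∀ i, IsIntertwiner ρ (ρ.comp α) (q i)),
        (∑ i, q i * p i) = 1 →
        ∀ z : IntwGrp ρ (ρ.comp (α.comp β)),
          φ (∑ i, QuotientAddGroup.mk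
              ((⟨q i, hq i⟩ : IntwGrp ρ (ρ.comp α)) ⊗ₜ[ℤ]
                pMulElem ρ α β (p i) (hp i) z)) = z) := by
  refine ⟨⟨IntwGrp.finite_of_ringHomLE hα, IntwGrp.projective_of_ringHomLE hα⟩,
    balancedTensorMul ρ α β, fun _ _ => rfl, ?_,
    fun _ _ _ hp hq hpq => rightInverse_balancedTensorMulInv hp hq hpq⟩
  obtain ⟨n, p, q, hp, hq, hpq⟩ := hα
  exact ⟨(leftInverse_balancedTensorMulInv hp hq hpq).injective,
    (rightInverse_balancedTensorMulInv hp hq hpq).surjective⟩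

/-- Let `ρ : B → A` and `α, β` be endomorphisms of `B` with `ρ∘α ≤ ρ` and `ρ∘β ≤ ρ`.
Then (i) `F(α) = Hom(ρ, ρ∘α)` is finitely generated projective as a right module over
`R = Hom(ρ,ρ)`; (ii) the map `F(α) ⊗_R F(β) → F(α∘β)` induced by multiplication in
`A` is bijective, with inverse `z ↦ Σ_i q_i ⊗ (p_i·z)` for any direct summand diagram
`p_i ∈ Hom(ρ∘α, ρ)`, `q_i ∈ Hom(ρ, ρ∘α)` witnessing `ρ∘α ≤ ρ`. -/
theorem stmt_16 (ρ : B →+* A) (α β : B →+* B)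
    (hα : RingHomLE (ρ.comp α) ρ) (hβ : RingHomLE (ρ.comp β) ρ) :
    (Module.Finite (EndSubring ρ)ᵐᵒᵖ (IntwGrp ρ (ρ.comp α)) ∧
      Module.Projective (EndSubring ρ)ᵐᵒᵖ (IntwGrp ρ (ρ.comp α))) ∧
    ∃ φ : ((IntwGrp ρ (ρ.comp α)) ⊗[ℤ] (IntwGrp ρ (ρ.comp β))) ⧸ balancedRelF ρ α β
        →+ IntwGrp ρ (ρ.comp (α.comp β)),
      (∀ (x : IntwGrp ρ (ρ.comp α)) (y : IntwGrp ρ (ρ.comp β)),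
        ((φ (QuotientAddGroup.mk (x ⊗ₜ[ℤ] y)) : A) = (x : A) * (y : A))) ∧
      Function.Bijective φ ∧
      (∀ (n : ℕ) (p q : Fin n → A)
        (hp : ∀ i, IsIntertwiner (ρ.comp α) ρ (p i))
        (hq : ∀ i, IsIntertwiner ρ (ρ.comp α) (q i)),
        (∑ i, q i * p i) = 1 →
        ∀ z : IntwGrp ρ (ρ.comp (α.comp β)),
          φ (∑ i, QuotientAddGroup.mk
              ((⟨q i, hq i⟩ : IntwGrp ρ (ρ.comp α)) ⊗ₜ[ℤ]
                pMulElem ρ α β (p i) (hp i) z)) = z) :=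
  stmt_16_general ρ α β hα
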